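/- The dihedral angle arccos(1/3) of the regular tetrahedron is an irrational multiple of π; hence no finite number of regular tetrahedra can be glued around a common edge to exactly fill space without gaps or overlaps. -/
import Mathlib

private def tetA : ℕ → ℤ
  | 0 => 1
  | 1 => 1
  | (n+2) => 2 * tetA (n+1) - 9 * tetA n

private lemma tetA_cos (θ : ℝ) (hθ : Real.cos θ = 1/3) :
    ∀ n : ℕ, Real.cos (n * θ) * 3 ^ n = (tetA n : ℝ) := by
  intro n
  induction n using Nat.strong_induction_on with
  | _ n ih =>
    match n with
    | 0 => simp [tetA]
    | 1 => simp [tetA, hθ]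
    | (n+2) =>
      have h1 := ih (n+1) (by omega)
      have h0 := ih n (by omega)
      have key : Real.cos ((n+2 : ℕ) * θ) + Real.cos (n * θ)
          = 2 * Real.cos ((n+1 : ℕ) * θ) * Real.cos θ := by
        have := Real.cos_add ((n+1 : ℕ) * θ) θ
        have := Real.cos_sub ((n+1 : ℕ) * θ) θ
        push_cast
        rw [show ((n:ℝ)+2) * θ = ((n:ℝ)+1) * θ + θ by ring,
            show (n:ℝ) * θ = ((n:ℝ)+1) * θ - θ by ring,
            Real.cos_add, Real.cos_sub]
        ring
      have : Real.cos ((n+2 : ℕ) * θ) = 2 * (1/3) * Real.cos ((n+1:ℕ) * θ) - Real.cos (n * θ) := by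
        rw [← hθ]; linarith [key]
      rw [this, tetA]
      push_cast
      push_cast at h1 h0
      linear_combination 2 * h1 - 9 * h0

private lemma tetA_mod (n : ℕ) : (tetA (n+1) : ZMod 3) = 2 ^ n := by
  induction n using Nat.strong_induction_on with
  | _ n ih =>
    match n with
    | 0 => simp [tetA]
    | (n+1) =>
      have := ih n (by omega)
      rw [show n+1+1 = n+2 from rfl, tetA]
      push_cast
      rw [this, show (9 : ZMod 3) = 0 by decide]
      ring

/-- The dihedral angle `arccos(1/3)` of the regular tetrahedron is an irrational multiple
of `π`; hence no positive integer number of regular tetrahedra glued around a common edge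
fills space exactly (`m · arccos(1/3) = 2π` is impossible). -/
theorem tetrahedron_dihedral_irrational :
    Irrational (Real.arccos (1 / 3) / Real.pi) ∧
      ∀ m : ℕ, 0 < m → (m : ℝ) * Real.arccos (1 / 3) ≠ 2 * Real.pi := by
  set θ := Real.arccos (1/3) with hθdef
  have hcos : Real.cos θ = 1/3 := Real.cos_arccos (by norm_num) (by norm_num)
  have hirr : Irrational (θ / Real.pi) := by
    rw [Irrational]
    rintro ⟨r, hr⟩
    have hpi := Real.pi_ne_zero
    have hθ : θ = r * Real.pi := by
      field_simp at hr; linarith [hr]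
    set q : ℕ := 2 * r.den with hq
    have hq1 : 1 ≤ q := by have := r.pos; omega
    have hcosq : Real.cos (q * θ) = 1 := by
      have : (q : ℝ) * θ = (2 * r.num) * Real.pi := by
        rw [hθ, hq]
        push_cast
        rw [show (2 * (r.den:ℝ)) * ((r:ℝ) * Real.pi) = 2 * ((r:ℝ) * r.den) * Real.pi by ring]
        rw_mod_cast [Rat.mul_den_eq_num]
        push_cast; ring
      rw [this, show (2 * (r.num:ℝ)) * Real.pi = (r.num : ℝ) * (2 * Real.pi) by ring]
      exact_mod_cast Real.cos_int_mul_two_pi r.num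
    have heq := tetA_cos θ hcos q
    rw [hcosq, one_mul] at heq
    have hint : (tetA q : ℤ) = 3 ^ q := by exact_mod_cast heq.symm
    have hmod := tetA_mod (q - 1)
    rw [show q - 1 + 1 = q by omega, hint] at hmod
    push_cast at hmod
    rw [show (3 : ZMod 3) = 0 by decide, zero_pow (by omega : q ≠ 0)] at hmod
    have : (2 : ZMod 3) ^ (q-1) ≠ 0 := pow_ne_zero _ (by decide)
    exact this hmod.symm
  refine ⟨hirr, fun m hm hEq => ?_⟩
  apply hirr
  refine ⟨(2 : ℚ) / m, ?_⟩
  have hpi := Real.pi_ne_zero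
  have hm' : (m : ℝ) ≠ 0 := by positivity
  push_cast
  rw [div_eq_div_iff hm' hpi]
  linarith [hEq]
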